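/- arXiv:1203.5480 — 2 statements merged into one kernel-verified Lean document; each statement's English description precedes it below -/
import Mathlib

section
/- Let f be a bi-univalent function of the class S*_σ(φ), i.e. f is bi-univalent with inverse extension F and both zf'(z)/f(z) ≺ φ(z) and wF'(w)/F(w) ≺ φ(w). Then the second Taylor coefficient of f satisfies |a₂| ≤ √(B₁ + |B₂ − B₁|). -/
/-!
Write `z f'/f = φ ∘ ω` and `w F'/F = φ ∘ δ` with Schwarz functions `ω = c₁ z + c₂ z² + ⋯` and
`δ = d₁ w + d₂ w² + ⋯`. Differentiating `F ∘ f = id` expresses the coefficients of `F` through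
`a₂, a₃`; comparing the coefficients of `z²` and `z³` in `φ(ω(z)) f(z) = z f'(z)` and in its
analogue for `F` gives `B₁ c₁ = a₂ = -B₁ d₁`, and adding the two `z³` relations eliminates `a₃`:
`a₂² = (B₂ - B₁) c₁² + (B₁ / 2) ((c₂ + c₁²) + (d₂ + d₁²))`.
The bound follows from `|c₁| ≤ 1` and `|c₂ + c₁²| ≤ 1`, since Schwarz–Pick applied to `ω z / z`
gives `|c₂| ≤ 1 - |c₁|²`.
-/

open Metric Set Complex

noncomputable section

/-- `g` is subordinate to `h` on the unit disk: there is an analytic `ω : 𝔻 → 𝔻`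
with `ω 0 = 0` such that `g = h ∘ ω` on `𝔻`. -/
def Subordinate (g h : ℂ → ℂ) : Prop :=
  ∃ ω : ℂ → ℂ, DifferentiableOn ℂ ω (ball 0 1) ∧ ω 0 = 0 ∧
    (∀ z ∈ ball (0 : ℂ) 1, ω z ∈ ball (0 : ℂ) 1) ∧
    ∀ z ∈ ball (0 : ℂ) 1, g z = h (ω z)

open Filter Topology ComplexConjugate

section TaylorCoefficients

variable {𝕜 : Type*} [NontriviallyNormedField 𝕜]

theorem iteratedDeriv_succ_fun_id_mul_zero {v : 𝕜 → 𝕜} {n : ℕ}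
    (hv : ContDiffAt 𝕜 (n + 1 : ℕ) v 0) :
    iteratedDeriv (n + 1) (fun z => z * v z) 0 = (n + 1) * iteratedDeriv n v 0 := by
  rw [iteratedDeriv_fun_mul contDiffAt_fun_id hv, Finset.sum_eq_single 1]
  · simp [iteratedDeriv_fun_id_zero]
  · intro i _ hi
    simp [iteratedDeriv_fun_id_zero, hi]
  · simp

variable [CompleteSpace 𝕜]

theorem iteratedDeriv_succ_fun_id_mul_deriv_zero {v : 𝕜 → 𝕜} (hv : AnalyticAt 𝕜 v 0) (n : ℕ) :
    iteratedDeriv (n + 1) (fun z => z * deriv v z) 0 = (n + 1) * iteratedDeriv (n + 1) v 0 := by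
  rw [iteratedDeriv_succ_fun_id_mul_zero hv.deriv.contDiffAt, iteratedDeriv_succ']

theorem coeff_relations_of_mul_eq_id_mul_deriv {u v : 𝕜 → 𝕜} (hu : AnalyticAt 𝕜 u 0)
    (hv : AnalyticAt 𝕜 v 0) (h : (fun z => u z * v z) =ᶠ[𝓝 0] fun z => z * deriv v z)
    (hu0 : u 0 = 1) (hv0 : v 0 = 0) (hv1 : deriv v 0 = 1) :
    2 * deriv u 0 = iteratedDeriv 2 v 0 ∧
      3 * iteratedDeriv 2 u 0 + 3 * deriv u 0 * iteratedDeriv 2 v 0 =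
        2 * iteratedDeriv 3 v 0 := by
  have h2 := h.iteratedDeriv_eq 2
  have h3 := h.iteratedDeriv_eq 3
  rw [iteratedDeriv_fun_mul hu.contDiffAt hv.contDiffAt,
    iteratedDeriv_succ_fun_id_mul_deriv_zero hv] at h2 h3
  simp only [Nat.reduceAdd, Finset.sum_range_succ, Finset.range_one, Finset.sum_singleton,
    Nat.choose, Nat.cast_one, iteratedDeriv_zero, hu0, mul_one, tsub_zero, one_mul, add_zero,
    Nat.cast_ofNat, iteratedDeriv_one, Nat.add_one_sub_one, hv1, tsub_self, hv0, mul_zero,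
    Nat.reduceSub] at h2 h3
  exact ⟨by linear_combination h2, by linear_combination h3⟩

theorem coeff_relations_of_comp_mul_eq_id_mul_deriv {φ ω f : 𝕜 → 𝕜} (hφ : AnalyticAt 𝕜 φ 0)
    (hω : AnalyticAt 𝕜 ω 0) (hf : AnalyticAt 𝕜 f 0)
    (h : (fun z => φ (ω z) * f z) =ᶠ[𝓝 0] fun z => z * deriv f z)
    (hφ0 : φ 0 = 1) (hω0 : ω 0 = 0) (hf0 : f 0 = 0) (hf1 : deriv f 0 = 1) :
    2 * (deriv φ 0 * deriv ω 0) = iteratedDeriv 2 f 0 ∧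
      3 * (iteratedDeriv 2 φ 0 * deriv ω 0 ^ 2 + deriv φ 0 * iteratedDeriv 2 ω 0) +
          3 * (deriv φ 0 * deriv ω 0) * iteratedDeriv 2 f 0 = 2 * iteratedDeriv 3 f 0 := by
  rw [← hω0] at hφ
  have := coeff_relations_of_mul_eq_id_mul_deriv (hφ.comp hω) hf h (by simp [hω0, hφ0]) hf0 hf1
  rwa [deriv_comp _ hφ.differentiableAt hω.differentiableAt,
    iteratedDeriv_comp_two hφ.contDiffAt hω.contDiffAt, hω0] at this

theorem coeff_relations_of_comp_eq_id {f F : 𝕜 → 𝕜} (hf : AnalyticAt 𝕜 f 0)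
    (hF : AnalyticAt 𝕜 F 0) (hf0 : f 0 = 0) (hf1 : deriv f 0 = 1) (h : F ∘ f =ᶠ[𝓝 0] id) :
    deriv F 0 = 1 ∧ iteratedDeriv 2 F 0 = -iteratedDeriv 2 f 0 ∧
      iteratedDeriv 3 F 0 = 3 * iteratedDeriv 2 f 0 ^ 2 - iteratedDeriv 3 f 0 := by
  rw [← hf0] at hF
  have h1 := h.deriv_eq
  have h2 := h.iteratedDeriv_eq 2
  have h3 := h.iteratedDeriv_eq 3
  rw [deriv_comp _ hF.differentiableAt hf.differentiableAt] at h1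
  rw [iteratedDeriv_comp_two hF.contDiffAt hf.contDiffAt] at h2
  rw [iteratedDeriv_comp_three hF.contDiffAt hf.contDiffAt] at h3
  simp only [hf0, hf1, mul_one, one_pow, deriv_id', iteratedDeriv_id, OfNat.ofNat_ne_zero,
    OfNat.ofNat_ne_one, ↓reduceIte] at h1 h2 h3
  rw [h1] at h2 h3
  exact ⟨h1, by linear_combination h2, by linear_combination h3 - 3 * iteratedDeriv 2 f 0 * h2⟩

end TaylorCoefficients

theorem normSq_one_sub_conj_mul_sub_normSq_sub (a w : ℂ) :
    normSq (1 - conj a * w) - normSq (w - a) = (1 - normSq a) * (1 - normSq w) := by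
  simp only [normSq_apply, sub_re, sub_im, mul_re, mul_im, conj_re, conj_im, one_re, one_im]
  ring

theorem norm_sub_le_norm_one_sub_conj_mul {a w : ℂ} (ha : ‖a‖ ≤ 1) (hw : ‖w‖ ≤ 1) :
    ‖w - a‖ ≤ ‖1 - conj a * w‖ := by
  have key := normSq_one_sub_conj_mul_sub_normSq_sub a w
  rw [← sq_le_sq₀ (norm_nonneg _) (norm_nonneg _), ← normSq_eq_norm_sq, ← normSq_eq_norm_sq]
  have ha' : normSq a ≤ 1 := by rw [normSq_eq_norm_sq]; nlinarith [norm_nonneg a]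
  have hw' : normSq w ≤ 1 := by rw [normSq_eq_norm_sq]; nlinarith [norm_nonneg w]
  nlinarith

/-- Schwarz–Pick at the origin: compose `h` with the disk automorphism sending `h 0` to `0`
and apply the Schwarz lemma; if `‖h 0‖ = 1`, `h` is constant by the maximum modulus principle. -/
theorem norm_deriv_zero_le_one_sub_sq {h : ℂ → ℂ} (hd : DifferentiableOn ℂ h (ball 0 1))
    (hm : MapsTo h (ball 0 1) (closedBall 0 1)) : ‖deriv h 0‖ ≤ 1 - ‖h 0‖ ^ 2 := by
  have hball : ball (0 : ℂ) 1 ∈ 𝓝 0 := ball_mem_nhds 0 one_pos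
  have hbound : ∀ z ∈ ball (0 : ℂ) 1, ‖h z‖ ≤ 1 := fun z hz => by simpa using hm hz
  set a := h 0 with ha_def
  have ha : ‖a‖ ≤ 1 := hbound 0 (mem_ball_self one_pos)
  rcases ha.eq_or_lt with ha | ha
  · have hmax : IsLocalMax (norm ∘ h) 0 :=
      Filter.mem_of_superset hball fun z hz => (hbound z hz).trans ha.ge
    have hconst : h =ᶠ[𝓝 0] fun _ => a :=
      Complex.eventually_eq_of_isLocalMax_norm (hd.eventually_differentiableAt hball) hmax
    simp [hconst.deriv_eq, ha]
  have hpos : 0 < 1 - ‖a‖ ^ 2 := by nlinarith [norm_nonneg a]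
  have hden : ∀ z ∈ ball (0 : ℂ) 1, 1 - conj a * h z ≠ 0 := by
    intro z hz hzero
    have : ‖conj a * h z‖ < 1 := by
      rw [norm_mul, norm_conj]
      nlinarith [hbound z hz, norm_nonneg a, norm_nonneg (h z)]
    simp [← sub_eq_zero.mp hzero] at this
  set ψ := fun z => (h z - a) / (1 - conj a * h z)
  have hψd : DifferentiableOn ℂ ψ (ball 0 1) :=
    (hd.sub_const a).div ((hd.const_mul _).const_sub 1) hden
  have hψm : MapsTo ψ (ball 0 1) (closedBall (ψ 0) 1) := by
    intro z hz
    simp only [ψ, ← ha_def, sub_self, zero_div, mem_closedBall_zero_iff, norm_div]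
    exact div_le_one_of_le₀ (norm_sub_le_norm_one_sub_conj_mul ha.le (hbound z hz))
      (norm_nonneg _)
  have h' : HasDerivAt h (deriv h 0) 0 := (hd.differentiableAt hball).hasDerivAt
  have hψ' : HasDerivAt ψ (deriv h 0 / (1 - ‖a‖ ^ 2 : ℝ)) 0 := by
    refine ((h'.sub_const a).div ((h'.const_mul (conj a)).const_sub 1)
      (hden 0 (mem_ball_self one_pos))).congr_deriv ?_
    have : (1 - ‖a‖ ^ 2 : ℂ) ≠ 0 := by exact_mod_cast hpos.ne'
    rw [← ha_def, sub_self, zero_mul, sub_zero, conj_mul']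
    push_cast
    field_simp
  have := norm_deriv_le_one_of_mapsTo_ball hψd hψm one_pos
  rwa [hψ'.deriv, norm_div, norm_real, Real.norm_of_nonneg hpos.le, div_le_one hpos] at this

theorem norm_iteratedDeriv_two_add_two_mul_deriv_sq_le {ω : ℂ → ℂ}
    (hd : DifferentiableOn ℂ ω (ball 0 1)) (h0 : ω 0 = 0)
    (hm : MapsTo ω (ball 0 1) (closedBall 0 1)) :
    ‖iteratedDeriv 2 ω 0 + 2 * deriv ω 0 ^ 2‖ ≤ 2 := by
  have hball : ball (0 : ℂ) 1 ∈ 𝓝 0 := ball_mem_nhds 0 one_pos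
  set h := dslope ω 0
  have hhd : DifferentiableOn ℂ h (ball 0 1) := (differentiableOn_dslope hball).mpr hd
  have hhm : MapsTo h (ball 0 1) (closedBall 0 1) := fun z hz => by
    simpa using norm_dslope_le_div_of_mapsTo_ball hd (by rwa [h0]) hz
  have hω : ω = fun z => z * h z := funext fun z => by
    simpa [h0] using (sub_smul_dslope ω 0 z).symm
  have hh : ContDiffAt ℂ 2 h 0 := (hhd.analyticAt hball).contDiffAt
  have h1 : deriv ω 0 = h 0 := by
    simpa [hω] using iteratedDeriv_succ_fun_id_mul_zero (n := 0) (hh.of_le (by norm_num))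
  have h2 : iteratedDeriv 2 ω 0 = 2 * deriv h 0 := by
    simpa [hω, one_add_one_eq_two] using iteratedDeriv_succ_fun_id_mul_zero (n := 1) hh
  calc ‖iteratedDeriv 2 ω 0 + 2 * deriv ω 0 ^ 2‖ = 2 * ‖deriv h 0 + h 0 ^ 2‖ := by
        rw [h1, h2, ← mul_add, norm_mul, Complex.norm_two]
    _ ≤ 2 * (‖deriv h 0‖ + ‖h 0‖ ^ 2) := by grw [norm_add_le, norm_pow]
    _ ≤ 2 := by linarith [norm_deriv_zero_le_one_sub_sq hhd hhm]

theorem eventually_comp_mul_eq_id_mul_deriv {f g φ ω : ℂ → ℂ} (hf0 : f 0 = 0)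
    (hfi : InjOn f (ball 0 1)) (hgf : ∀ z ∈ ball (0 : ℂ) 1, z ≠ 0 → g z = z * deriv f z / f z)
    (hg : ∀ z ∈ ball (0 : ℂ) 1, g z = φ (ω z)) :
    (fun z => φ (ω z) * f z) =ᶠ[𝓝 0] fun z => z * deriv f z := by
  filter_upwards [ball_mem_nhds (0 : ℂ) one_pos] with z hz
  rcases eq_or_ne z 0 with rfl | hz0
  · simp [hf0]
  · have hfz : f z ≠ 0 := fun hfz => hz0 (hfi hz (mem_ball_self one_pos) (hfz.trans hf0.symm))
    rw [← hg z hz, hgf z hz hz0, div_mul_cancel₀ _ hfz]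

theorem norm_half_le_sqrt_of_sq_eq {B₁ B₂ : ℝ} (hB₁ : 0 ≤ B₁) {A c p q : ℂ} (hc : ‖c‖ ≤ 1)
    (hp : ‖p‖ ≤ 2) (hq : ‖q‖ ≤ 2)
    (h : A ^ 2 = 4 * (B₂ - B₁ : ℝ) * c ^ 2 + B₁ * p + B₁ * q) :
    ‖A / 2‖ ≤ Real.sqrt (B₁ + |B₂ - B₁|) := by
  have hA : ‖A‖ ^ 2 ≤ 4 * |B₂ - B₁| * ‖c‖ ^ 2 + B₁ * ‖p‖ + B₁ * ‖q‖ := by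
    rw [← norm_pow, h]
    grw [norm_add_le, norm_add_le]
    simp only [norm_mul, norm_pow, norm_real, Real.norm_eq_abs, abs_of_nonneg hB₁,
      RCLike.norm_ofNat, le_refl]
  have hc2 : ‖c‖ ^ 2 ≤ 1 := pow_le_one₀ (norm_nonneg c) hc
  apply Real.le_sqrt_of_sq_le
  rw [norm_div, Complex.norm_two, div_pow]
  nlinarith [abs_nonneg (B₂ - B₁)]

theorem stmt2_general
    (f F : ℂ → ℂ)
    (hf : DifferentiableOn ℂ f (ball 0 1)) (hf0 : f 0 = 0) (hf1 : deriv f 0 = 1)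
    (hfi : InjOn f (ball 0 1))
    (hF : DifferentiableOn ℂ F (ball 0 1)) (hF0 : F 0 = 0) (hFi : InjOn F (ball 0 1))
    (hFf : ∀ᶠ z in nhds (0 : ℂ), F (f z) = z)
    (φ : ℂ → ℂ) (B₁ B₂ : ℝ)
    (hφ : DifferentiableOn ℂ φ (ball 0 1)) (hφ0 : φ 0 = 1)
    (hB₁ : 0 < B₁) (hφ1 : deriv φ 0 = (B₁ : ℂ)) (hφ2 : iteratedDeriv 2 φ 0 = 2 * (B₂ : ℂ))
    (g : ℂ → ℂ)
    (hgf : ∀ z ∈ ball (0 : ℂ) 1, z ≠ 0 → g z = z * deriv f z / f z)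
    (hgsub : Subordinate g φ)
    (G : ℂ → ℂ)
    (hGF : ∀ w ∈ ball (0 : ℂ) 1, w ≠ 0 → G w = w * deriv F w / F w)
    (hGsub : Subordinate G φ) :
    ‖iteratedDeriv 2 f 0 / 2‖ ≤ Real.sqrt (B₁ + |B₂ - B₁|) := by
  have hball : ball (0 : ℂ) 1 ∈ 𝓝 0 := ball_mem_nhds 0 one_pos
  obtain ⟨ω, hωd, hω0, hωm, hωg⟩ := hgsub
  obtain ⟨δ, hδd, hδ0, hδm, hδG⟩ := hGsub
  have hfa := hf.analyticAt hball
  have hφa := hφ.analyticAt hball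
  obtain ⟨hF1, hF2, hF3⟩ := coeff_relations_of_comp_eq_id hfa (hF.analyticAt hball) hf0 hf1 hFf
  obtain ⟨hc1, hc2⟩ := coeff_relations_of_comp_mul_eq_id_mul_deriv hφa (hωd.analyticAt hball)
    hfa (eventually_comp_mul_eq_id_mul_deriv hf0 hfi hgf hωg) hφ0 hω0 hf0 hf1
  obtain ⟨hd1, hd2⟩ := coeff_relations_of_comp_mul_eq_id_mul_deriv hφa (hδd.analyticAt hball)
    (hF.analyticAt hball) (eventually_comp_mul_eq_id_mul_deriv hF0 hFi hGF hδG) hφ0 hδ0 hF0 hF1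
  simp only [hφ1, hφ2, hF2, hF3] at hc1 hc2 hd1 hd2
  have hδω : deriv δ 0 = -deriv ω 0 := by
    have : (B₁ : ℂ) ≠ 0 := by exact_mod_cast hB₁.ne'
    exact mul_left_cancel₀ this (by linear_combination (hd1 + hc1) / 2)
  have hωm' : MapsTo ω (ball 0 1) (closedBall 0 1) :=
    fun z hz => ball_subset_closedBall (hωm z hz)
  have hδm' : MapsTo δ (ball 0 1) (closedBall 0 1) :=
    fun z hz => ball_subset_closedBall (hδm z hz)
  refine norm_half_le_sqrt_of_sq_eq hB₁.le
    (norm_deriv_le_one_of_mapsTo_ball hωd (by rwa [hω0]) one_pos)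
    (norm_iteratedDeriv_two_add_two_mul_deriv_sq_le hωd hω0 hωm')
    (norm_iteratedDeriv_two_add_two_mul_deriv_sq_le hδd hδ0 hδm') ?_
  rw [hδω] at hd2 ⊢
  push_cast
  linear_combination -(hc2 + hd2) / 3 + iteratedDeriv 2 f 0 * hc1

theorem stmt2
    (f F : ℂ → ℂ)
    (hf : DifferentiableOn ℂ f (ball 0 1)) (hf0 : f 0 = 0) (hf1 : deriv f 0 = 1)
    (hfi : InjOn f (ball 0 1))
    (hF : DifferentiableOn ℂ F (ball 0 1)) (hF0 : F 0 = 0) (hFi : InjOn F (ball 0 1))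
    (hFf : ∀ᶠ z in nhds (0 : ℂ), F (f z) = z)
    (φ : ℂ → ℂ) (B₁ B₂ : ℝ)
    (hφ : DifferentiableOn ℂ φ (ball 0 1)) (hφ0 : φ 0 = 1)
    (hB₁ : 0 < B₁) (hφ1 : deriv φ 0 = (B₁ : ℂ)) (hφ2 : iteratedDeriv 2 φ 0 = 2 * (B₂ : ℂ))
    (g : ℂ → ℂ) (hg0 : g 0 = 1)
    (hgf : ∀ z ∈ ball (0 : ℂ) 1, z ≠ 0 → g z = z * deriv f z / f z)
    (hgsub : Subordinate g φ)
    (G : ℂ → ℂ) (hG0 : G 0 = 1)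
    (hGF : ∀ w ∈ ball (0 : ℂ) 1, w ≠ 0 → G w = w * deriv F w / F w)
    (hGsub : Subordinate G φ) :
    ‖iteratedDeriv 2 f 0 / 2‖ ≤ Real.sqrt (B₁ + |B₂ - B₁|) :=
  stmt2_general f F hf hf0 hf1 hfi hF hF0 hFi hFf φ B₁ B₂ hφ hφ0 hB₁ hφ1 hφ2 g hgf hgsub G hGF hGsub
end
end

section
/- Let 0 < α ≤ 1 and let f be a strongly bi-starlike function of order α, i.e. f is bi-univalent with inverse extension F and both zf'(z)/f(z) ≺ ((1+z)/(1−z))^α and wF'(w)/F(w) ≺ ((1+w)/(1−w))^α (equivalently, |arg(zf'(z)/f(z))| < απ/2 and |arg(wF'(w)/F(w))| < απ/2 on 𝔻). Then the second Taylor coefficient of f satisfies |a₂| ≤ 2α/√(1+α). -/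
/-!
For a normalized f with g = zf'/f, the function φ = g^(1/α) has positive real part and
φ(0) = 1, so ω = (φ - 1)/(φ + 1) is a Schwarz function. Schwarz–Pick applied to ω(z)/z gives
|ω''(0)/2| ≤ 1 - |ω'(0)|², which unwinds to the Fekete–Szegő type bound
|4a₃ - 3a₂²| ≤ 4α - |a₂|²/α. The inverse F has coefficients -a₂ and 2a₂² - a₃, and adding the
bounds for f and F eliminates a₃: 2|a₂|² ≤ 8α - 2|a₂|²/α.
-/

open Metric Set Complex Filter Topology ComplexConjugate

noncomputable section

section IteratedDeriv

variable {𝕜 : Type*} [NontriviallyNormedField 𝕜]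

theorem deriv_deriv_eq_iteratedDeriv_two (u : 𝕜 → 𝕜) : deriv (deriv u) = iteratedDeriv 2 u := by
  rw [iteratedDeriv_succ, iteratedDeriv_one]

theorem iteratedDeriv_two_eq_of_hasDerivAt {u u' : 𝕜 → 𝕜} {x c : 𝕜}
    (hu : ∀ᶠ y in 𝓝 x, HasDerivAt u (u' y) y) (hu' : HasDerivAt u' c x) :
    iteratedDeriv 2 u x = c := by
  have : deriv u =ᶠ[𝓝 x] u' := hu.mono fun y hy => hy.deriv
  rw [← deriv_deriv_eq_iteratedDeriv_two, this.deriv_eq, hu'.deriv]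

theorem iteratedDeriv_two_mul_apply {u v : 𝕜 → 𝕜} {x : 𝕜} (hu : ContDiffAt 𝕜 2 u x)
    (hv : ContDiffAt 𝕜 2 v x) :
    iteratedDeriv 2 (fun y => u y * v y) x =
      iteratedDeriv 2 u x * v x + 2 * deriv u x * deriv v x + u x * iteratedDeriv 2 v x := by
  rw [iteratedDeriv_fun_mul hu hv]
  simp only [Finset.sum_range_succ, Finset.range_one, Finset.sum_singleton, Nat.choose_zero_right,
    Nat.choose_succ_self_right, Nat.choose_self, iteratedDeriv_zero, iteratedDeriv_one]
  norm_num
  ring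

theorem iteratedDeriv_succ_mul_id_zero {u : 𝕜 → 𝕜} {n : ℕ} (hu : ContDiffAt 𝕜 (n + 1) u 0) :
    iteratedDeriv (n + 1) (fun y => y * u y) 0 = (n + 1) * iteratedDeriv n u 0 := by
  rw [iteratedDeriv_fun_mul contDiffAt_fun_id hu, Finset.sum_eq_single 1]
  · simp
  · intro i _ hi
    simp [iteratedDeriv_fun_id_zero, hi]
  · simp

variable [CompleteSpace 𝕜]

theorem AnalyticAt.hasDerivAt_deriv_comp {φ f : 𝕜 → 𝕜} {x : 𝕜}
    (hφ : AnalyticAt 𝕜 φ (f x)) (hf : AnalyticAt 𝕜 f x) :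
    HasDerivAt (fun z => deriv φ (f z)) (iteratedDeriv 2 φ (f x) * deriv f x) x := by
  rw [← deriv_deriv_eq_iteratedDeriv_two]
  exact hφ.deriv.differentiableAt.hasDerivAt.comp x hf.differentiableAt.hasDerivAt

theorem AnalyticAt.iteratedDeriv_two_comp {φ f : 𝕜 → 𝕜} {x : 𝕜}
    (hφ : AnalyticAt 𝕜 φ (f x)) (hf : AnalyticAt 𝕜 f x) :
    iteratedDeriv 2 (fun z => φ (f z)) x =
      iteratedDeriv 2 φ (f x) * deriv f x ^ 2 + deriv φ (f x) * iteratedDeriv 2 f x := by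
  refine iteratedDeriv_two_eq_of_hasDerivAt (u' := fun z => deriv φ (f z) * deriv f z) ?_ ?_
  · filter_upwards [hf.eventually_analyticAt,
      hf.continuousAt.eventually hφ.eventually_analyticAt] with z hfz hφz
    exact hφz.differentiableAt.hasDerivAt.comp z hfz.differentiableAt.hasDerivAt
  · have h := (hφ.hasDerivAt_deriv_comp hf).fun_mul hf.deriv.differentiableAt.hasDerivAt
    rw [deriv_deriv_eq_iteratedDeriv_two] at h
    exact h.congr_deriv (by ring)

theorem AnalyticAt.iteratedDeriv_three_comp {φ f : 𝕜 → 𝕜} {x : 𝕜}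
    (hφ : AnalyticAt 𝕜 φ (f x)) (hf : AnalyticAt 𝕜 f x) :
    iteratedDeriv 3 (fun z => φ (f z)) x =
      iteratedDeriv 3 φ (f x) * deriv f x ^ 3 +
        3 * iteratedDeriv 2 φ (f x) * deriv f x * iteratedDeriv 2 f x +
          deriv φ (f x) * iteratedDeriv 3 f x := by
  have hderiv : deriv (fun z => φ (f z)) =ᶠ[𝓝 x] fun z => deriv φ (f z) * deriv f z := by
    filter_upwards [hf.eventually_analyticAt,
      hf.continuousAt.eventually hφ.eventually_analyticAt] with z hfz hφz
    exact deriv_comp z hφz.differentiableAt hfz.differentiableAt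
  rw [iteratedDeriv_succ', hderiv.iteratedDeriv_eq, iteratedDeriv_two_mul_apply
      (u := fun z => deriv φ (f z)) (hφ.deriv.comp_of_eq hf rfl).contDiffAt hf.deriv.contDiffAt,
    hφ.deriv.iteratedDeriv_two_comp hf, (hφ.hasDerivAt_deriv_comp hf).deriv,
    ← iteratedDeriv_succ', ← iteratedDeriv_succ']
  simp only [deriv_deriv_eq_iteratedDeriv_two]
  ring

theorem iteratedDeriv_of_comp_eq_id {f F : 𝕜 → 𝕜} {x : 𝕜} (hf : AnalyticAt 𝕜 f x)
    (hF : AnalyticAt 𝕜 F (f x)) (hf1 : deriv f x = 1)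
    (hFf : (fun z => F (f z)) =ᶠ[𝓝 x] fun z => z) :
    deriv F (f x) = 1 ∧ iteratedDeriv 2 F (f x) = -iteratedDeriv 2 f x ∧
      iteratedDeriv 3 F (f x) = 3 * iteratedDeriv 2 f x ^ 2 - iteratedDeriv 3 f x := by
  have h1 := hFf.iteratedDeriv_eq 1
  have h2 := hFf.iteratedDeriv_eq 2
  have h3 := hFf.iteratedDeriv_eq 3
  rw [iteratedDeriv_one, ← Function.comp_def,
    deriv_comp x hF.differentiableAt hf.differentiableAt] at h1
  rw [hF.iteratedDeriv_two_comp hf] at h2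
  rw [hF.iteratedDeriv_three_comp hf] at h3
  simp only [hf1, mul_one, iteratedDeriv_fun_id, one_ne_zero, ↓reduceIte, one_pow,
    OfNat.ofNat_ne_zero, OfNat.ofNat_ne_one] at h1 h2 h3
  have hF2 : iteratedDeriv 2 F (f x) = -iteratedDeriv 2 f x := by
    linear_combination h2 - iteratedDeriv 2 f x * h1
  exact ⟨h1, hF2,
    by linear_combination h3 - 3 * iteratedDeriv 2 f x * hF2 - iteratedDeriv 3 f x * h1⟩

end IteratedDeriv

section Schwarz

def blaschkeFactor (u w : ℂ) : ℂ := (w - u) / (1 - conj u * w)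

theorem blaschkeFactor_self (u : ℂ) : blaschkeFactor u u = 0 := by
  simp [blaschkeFactor]

theorem one_sub_conj_mul_ne_zero {u w : ℂ} (hu : ‖u‖ < 1) (hw : ‖w‖ ≤ 1) :
    1 - conj u * w ≠ 0 := by
  refine sub_ne_zero.mpr fun h => ?_
  have : ‖conj u * w‖ < 1 := by
    rw [norm_mul, RCLike.norm_conj]
    nlinarith [norm_nonneg u, norm_nonneg w]
  rw [← h, norm_one] at this
  exact lt_irrefl _ this

theorem norm_blaschkeFactor_le_one {u w : ℂ} (hu : ‖u‖ < 1) (hw : ‖w‖ ≤ 1) :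
    ‖blaschkeFactor u w‖ ≤ 1 := by
  have key : normSq (1 - conj u * w) - normSq (w - u) = (1 - normSq u) * (1 - normSq w) := by
    simp only [normSq_apply, sub_re, sub_im, mul_re, mul_im, one_re, one_im, conj_re, conj_im]
    ring
  have hnu : normSq u ≤ 1 := by rw [normSq_eq_norm_sq]; nlinarith [norm_nonneg u]
  have hnw : normSq w ≤ 1 := by rw [normSq_eq_norm_sq]; nlinarith [norm_nonneg w]
  rw [blaschkeFactor, norm_div, div_le_one (norm_pos_iff.mpr (one_sub_conj_mul_ne_zero hu hw)),
    norm_def, norm_def]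
  exact Real.sqrt_le_sqrt (by nlinarith)

theorem hasDerivAt_blaschkeFactor {u w : ℂ} (hu : ‖u‖ < 1) (hw : ‖w‖ ≤ 1) :
    HasDerivAt (blaschkeFactor u) ((1 - conj u * u) / (1 - conj u * w) ^ 2) w :=
  (((hasDerivAt_id w).sub_const u).div (((hasDerivAt_id w).const_mul (conj u)).const_sub 1)
    (one_sub_conj_mul_ne_zero hu hw)).congr_deriv
    (by simp only [id_eq, one_mul, mul_one, mul_neg, sub_neg_eq_add]; ring)

theorem norm_deriv_le_one_sub_sq_of_mapsTo_closedBall {ψ : ℂ → ℂ}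
    (hd : DifferentiableOn ℂ ψ (ball 0 1)) (hmaps : MapsTo ψ (ball 0 1) (closedBall 0 1)) :
    ‖deriv ψ 0‖ ≤ 1 - ‖ψ 0‖ ^ 2 := by
  have hψ : ∀ z ∈ ball (0 : ℂ) 1, ‖ψ z‖ ≤ 1 := fun z hz => mem_closedBall_zero_iff.mp (hmaps hz)
  rcases (hψ 0 (mem_ball_self one_pos)).eq_or_lt with hmax | hu
  · have hloc : IsLocalMax (norm ∘ ψ) 0 :=
      Filter.mem_of_superset (ball_mem_nhds 0 one_pos) fun z hz => (hψ z hz).trans hmax.ge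
    have hconst : ψ =ᶠ[𝓝 0] fun _ => ψ 0 := Complex.eventually_eq_of_isLocalMax_norm
      (hd.eventually_differentiableAt (ball_mem_nhds 0 one_pos)) hloc
    rw [hconst.deriv_eq, deriv_const, hmax]
    norm_num
  · set u := ψ 0
    have hχd : DifferentiableOn ℂ (fun z => blaschkeFactor u (ψ z)) (ball 0 1) := fun z hz =>
      ((hasDerivAt_blaschkeFactor hu (hψ z hz)).differentiableAt.comp z
        (hd.differentiableAt (isOpen_ball.mem_nhds hz))).differentiableWithinAt
    have hχmaps : MapsTo (fun z => blaschkeFactor u (ψ z)) (ball 0 1)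
        (closedBall (blaschkeFactor u (ψ 0)) 1) := fun z hz => by
      rw [mem_closedBall, blaschkeFactor_self, dist_zero_right]
      exact norm_blaschkeFactor_le_one hu (hψ z hz)
    have hχ : HasDerivAt (fun z => blaschkeFactor u (ψ z))
        ((1 - conj u * u) / (1 - conj u * u) ^ 2 * deriv ψ 0) 0 :=
      (hasDerivAt_blaschkeFactor hu hu.le).comp 0
        (hd.differentiableAt (ball_mem_nhds 0 one_pos)).hasDerivAt
    have hschwarz := norm_deriv_le_div_of_mapsTo_ball hχd hχmaps one_pos
    have hpos : 0 < 1 - ‖u‖ ^ 2 := by nlinarith [norm_nonneg u]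
    have hne : (1 - (‖u‖ : ℂ) ^ 2) ≠ 0 := by exact_mod_cast hpos.ne'
    rw [hχ.deriv, conj_mul', div_one] at hschwarz
    rwa [show (1 - (‖u‖ : ℂ) ^ 2) / (1 - (‖u‖ : ℂ) ^ 2) ^ 2 * deriv ψ 0 =
        deriv ψ 0 / ((1 - ‖u‖ ^ 2 : ℝ) : ℂ) by push_cast; field_simp, norm_div, norm_real,
      Real.norm_of_nonneg hpos.le, div_le_one hpos] at hschwarz

theorem norm_iteratedDeriv_two_le_of_mapsTo_ball {ω : ℂ → ℂ}
    (hd : DifferentiableOn ℂ ω (ball 0 1)) (h0 : ω 0 = 0)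
    (hmaps : MapsTo ω (ball 0 1) (ball 0 1)) :
    ‖iteratedDeriv 2 ω 0‖ ≤ 2 * (1 - ‖deriv ω 0‖ ^ 2) := by
  set ψ := dslope ω 0
  have hψd : DifferentiableOn ℂ ψ (ball 0 1) :=
    (Complex.differentiableOn_dslope (ball_mem_nhds 0 one_pos)).mpr hd
  have hψmaps : MapsTo ψ (ball 0 1) (closedBall 0 1) := fun z hz => by
    have := norm_dslope_le_div_of_mapsTo_ball hd
      (by rw [h0]; exact hmaps.mono_right ball_subset_closedBall) hz
    rwa [div_one, ← mem_closedBall_zero_iff] at this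
  have hω : ω = fun z => z * ψ z := funext fun z => by
    simpa using (sub_smul_dslope_of_zero h0 z).symm
  have h2 : iteratedDeriv 2 ω 0 = 2 * deriv ψ 0 := by
    rw [hω, iteratedDeriv_succ_mul_id_zero
      (hψd.analyticAt (ball_mem_nhds 0 one_pos)).contDiffAt, iteratedDeriv_one]
    norm_num
  rw [h2, norm_mul, Complex.norm_two, ← dslope_same ω 0]
  linarith [norm_deriv_le_one_sub_sq_of_mapsTo_closedBall hψd hψmaps]

end Schwarz

section Caratheodory

def cayley (w : ℂ) : ℂ := (w - 1) / (w + 1)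

theorem add_one_ne_zero_of_re_pos {w : ℂ} (hw : 0 < w.re) : w + 1 ≠ 0 := by
  intro h
  have := congrArg re h
  simp only [add_re, one_re, zero_re] at this
  linarith

theorem norm_cayley_lt_one {w : ℂ} (hw : 0 < w.re) : ‖cayley w‖ < 1 := by
  have key : normSq (w + 1) - normSq (w - 1) = 4 * w.re := by
    simp only [normSq_apply, add_re, add_im, sub_re, sub_im, one_re, one_im]
    ring
  rw [cayley, norm_div, div_lt_one (norm_pos_iff.mpr (add_one_ne_zero_of_re_pos hw)),
    norm_def, norm_def]
  exact Real.sqrt_lt_sqrt (normSq_nonneg _) (by linarith)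

theorem hasDerivAt_cayley {w : ℂ} (hw : w + 1 ≠ 0) : HasDerivAt cayley (2 / (w + 1) ^ 2) w :=
  (((hasDerivAt_id w).sub_const 1).div ((hasDerivAt_id w).add_const 1) hw).congr_deriv
    (by simp only [id]; ring)

theorem analyticAt_cayley_one : AnalyticAt ℂ cayley 1 := by
  unfold cayley
  fun_prop (disch := norm_num)

theorem iteratedDeriv_two_cayley_one : iteratedDeriv 2 cayley 1 = -1 / 2 := by
  have hne : ∀ᶠ w : ℂ in 𝓝 1, w + 1 ≠ 0 :=
    (continuous_id.add continuous_const).continuousAt.eventually_ne (by norm_num)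
  refine iteratedDeriv_two_eq_of_hasDerivAt (hne.mono fun w hw => hasDerivAt_cayley hw) ?_
  exact ((hasDerivAt_const (1 : ℂ) (2 : ℂ)).div (((hasDerivAt_id' (1 : ℂ)).add_const 1).pow 2)
    (by norm_num)).congr_deriv (by norm_num)

theorem norm_iteratedDeriv_two_sub_sq_le_of_re_pos {φ : ℂ → ℂ}
    (hd : DifferentiableOn ℂ φ (ball 0 1)) (h0 : φ 0 = 1)
    (hre : ∀ z ∈ ball 0 1, 0 < (φ z).re) :
    ‖iteratedDeriv 2 φ 0 - deriv φ 0 ^ 2‖ ≤ 4 - ‖deriv φ 0‖ ^ 2 := by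
  have hφ : AnalyticAt ℂ φ 0 := hd.analyticAt (ball_mem_nhds 0 one_pos)
  have hcayley : ∀ z ∈ ball (0 : ℂ) 1, HasDerivAt cayley (2 / (φ z + 1) ^ 2) (φ z) := fun z hz =>
    hasDerivAt_cayley (add_one_ne_zero_of_re_pos (hre z hz))
  have hωd : DifferentiableOn ℂ (fun z => cayley (φ z)) (ball 0 1) := fun z hz =>
    ((hcayley z hz).differentiableAt.comp z
      (hd.differentiableAt (isOpen_ball.mem_nhds hz))).differentiableWithinAt
  have hωmaps : MapsTo (fun z => cayley (φ z)) (ball 0 1) (ball 0 1) := fun z hz =>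
    mem_ball_zero_iff.mpr (norm_cayley_lt_one (hre z hz))
  have h1 : deriv (fun z => cayley (φ z)) 0 = deriv φ 0 / 2 := by
    have h : HasDerivAt (fun z => cayley (φ z)) (2 / (φ 0 + 1) ^ 2 * deriv φ 0) 0 :=
      (hcayley 0 (mem_ball_self one_pos)).comp 0 hφ.differentiableAt.hasDerivAt
    rw [h.deriv, h0]
    ring
  have h2 : iteratedDeriv 2 (fun z => cayley (φ z)) 0 =
      (iteratedDeriv 2 φ 0 - deriv φ 0 ^ 2) / 2 := by
    have hc : AnalyticAt ℂ cayley (φ 0) := by rw [h0]; exact analyticAt_cayley_one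
    rw [hc.iteratedDeriv_two_comp hφ, h0, iteratedDeriv_two_cayley_one,
      (hasDerivAt_cayley (by norm_num)).deriv]
    ring
  have hschwarz := norm_iteratedDeriv_two_le_of_mapsTo_ball hωd (by simp [h0, cayley]) hωmaps
  rw [h1, h2, norm_div, norm_div, Complex.norm_two] at hschwarz
  linarith

end Caratheodory

section StronglyStarlike

theorem re_cpow_inv_pos_of_abs_arg_lt {w : ℂ} {α : ℝ} (hα : 0 < α) (hw : w ≠ 0)
    (h : |arg w| < α * Real.pi / 2) : 0 < (w ^ ((α⁻¹ : ℝ) : ℂ)).re := by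
  rw [cpow_def_of_ne_zero hw, exp_re]
  refine mul_pos (Real.exp_pos _) (Real.cos_pos_of_mem_Ioo ?_)
  have him : (log w * (α⁻¹ : ℝ)).im = arg w * α⁻¹ := by simp [mul_im, log_im]
  have hlt : |arg w * α⁻¹| < Real.pi / 2 := by
    rw [abs_mul, abs_of_pos (inv_pos.mpr hα), ← div_eq_mul_inv, div_lt_iff₀ hα]
    linarith
  rw [him]
  exact ⟨by linarith [neg_abs_le (arg w * α⁻¹)], by linarith [le_abs_self (arg w * α⁻¹)]⟩

theorem iteratedDeriv_two_cpow_const_one (c : ℂ) :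
    iteratedDeriv 2 (fun w : ℂ => w ^ c) 1 = c * (c - 1) := by
  have hslit : ∀ᶠ w : ℂ in 𝓝 1, w ∈ slitPlane := isOpen_slitPlane.mem_nhds one_mem_slitPlane
  refine iteratedDeriv_two_eq_of_hasDerivAt
    (hslit.mono fun w hw => (hasStrictDerivAt_cpow_const hw).hasDerivAt) ?_
  exact (((hasStrictDerivAt_cpow_const one_mem_slitPlane).hasDerivAt).const_mul c).congr_deriv
    (by simp)

theorem norm_iteratedDeriv_two_sub_sq_le_of_abs_arg_lt {g : ℂ → ℂ} {α : ℝ} (hα0 : 0 < α)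
    (hα1 : α ≤ 1) (hd : DifferentiableOn ℂ g (ball 0 1)) (h0 : g 0 = 1)
    (harg : ∀ z ∈ ball (0 : ℂ) 1, g z ≠ 0 ∧ |arg (g z)| < α * Real.pi / 2) :
    ‖iteratedDeriv 2 g 0 - deriv g 0 ^ 2‖ ≤ 4 * α - ‖deriv g 0‖ ^ 2 / α := by
  have hslit : ∀ z ∈ ball (0 : ℂ) 1, g z ∈ slitPlane := fun z hz =>
    mem_slitPlane_iff_arg.mpr ⟨fun h => by
      have := (harg z hz).2
      rw [h, abs_of_pos Real.pi_pos] at this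
      nlinarith [Real.pi_pos], (harg z hz).1⟩
  have hre : ∀ z ∈ ball (0 : ℂ) 1, 0 < (g z ^ ((α⁻¹ : ℝ) : ℂ)).re := fun z hz =>
    re_cpow_inv_pos_of_abs_arg_lt hα0 (harg z hz).1 (harg z hz).2
  set t : ℝ := α⁻¹
  have ht : 0 < t := inv_pos.mpr hα0
  have hαt : α * t = 1 := mul_inv_cancel₀ hα0.ne'
  have hg : AnalyticAt ℂ g 0 := hd.analyticAt (ball_mem_nhds 0 one_pos)
  have hpow : AnalyticAt ℂ (fun w : ℂ => w ^ (t : ℂ)) (g 0) := by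
    rw [h0]
    exact analyticAt_id.cpow analyticAt_const one_mem_slitPlane
  have h1 : deriv (fun z => g z ^ (t : ℂ)) 0 = t * deriv g 0 := by
    rw [deriv_cpow_const hg.differentiableAt (hslit 0 (mem_ball_self one_pos)), h0, one_cpow,
      mul_one]
  have h2 : iteratedDeriv 2 (fun z => g z ^ (t : ℂ)) 0 =
      t * (t - 1) * deriv g 0 ^ 2 + t * iteratedDeriv 2 g 0 := by
    rw [hpow.iteratedDeriv_two_comp hg, h0, iteratedDeriv_two_cpow_const_one,
      Complex.deriv_cpow_const one_mem_slitPlane, one_cpow, mul_one]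
  have hcara := norm_iteratedDeriv_two_sub_sq_le_of_re_pos (hd.cpow_const hslit) (by simp [h0]) hre
  rw [h1, h2, show (t : ℂ) * (t - 1) * deriv g 0 ^ 2 + t * iteratedDeriv 2 g 0 - (t * deriv g 0) ^ 2
    = t * (iteratedDeriv 2 g 0 - deriv g 0 ^ 2) by ring, norm_mul, norm_mul, norm_real,
    Real.norm_of_nonneg ht.le] at hcara
  calc ‖iteratedDeriv 2 g 0 - deriv g 0 ^ 2‖
      = α * (t * ‖iteratedDeriv 2 g 0 - deriv g 0 ^ 2‖) := by rw [← mul_assoc, hαt, one_mul]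
    _ ≤ α * (4 - (t * ‖deriv g 0‖) ^ 2) := mul_le_mul_of_nonneg_left hcara hα0.le
    _ = 4 * α - ‖deriv g 0‖ ^ 2 / α := by
      field_simp
      linear_combination (-‖deriv g 0‖ ^ 2 * (1 + α * t)) * hαt

theorem differentiableOn_of_eq_mul_deriv_div {f g : ℂ → ℂ} {U : Set ℂ} (hU : IsOpen U)
    (h0U : (0 : ℂ) ∈ U) (hf : DifferentiableOn ℂ f U) (hf0 : f 0 = 0) (hf1 : deriv f 0 = 1)
    (hfz : ∀ z ∈ U, z ≠ 0 → f z ≠ 0) (hg0 : g 0 = 1)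
    (hgf : ∀ z ∈ U, z ≠ 0 → g z = z * deriv f z / f z) :
    DifferentiableOn ℂ g U := by
  have hslope : ∀ z, z ≠ 0 → dslope f 0 z = f z / z := fun z hz => by
    rw [dslope_of_ne _ hz, slope_def_field, hf0, sub_zero, sub_zero]
  have hne : ∀ z ∈ U, dslope f 0 z ≠ 0 := fun z hz => by
    rcases eq_or_ne z 0 with rfl | hz0
    · simp [hf1]
    · rw [hslope z hz0]
      exact div_ne_zero (hfz z hz hz0) hz0
  refine ((hf.deriv hU).div ((differentiableOn_dslope (hU.mem_nhds h0U)).mpr hf) hne).congr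
    fun z hz => ?_
  rcases eq_or_ne z 0 with rfl | hz0
  · simp [hg0, hf1]
  · rw [hgf z hz hz0, Pi.div_apply, hslope z hz0]
    field_simp [hfz z hz hz0]

theorem deriv_and_iteratedDeriv_two_of_mul_eq {f g : ℂ → ℂ} (hf : AnalyticAt ℂ f 0)
    (hg : AnalyticAt ℂ g 0) (hf0 : f 0 = 0) (hf1 : deriv f 0 = 1) (hg0 : g 0 = 1)
    (hgf : (fun z => g z * f z) =ᶠ[𝓝 0] fun z => z * deriv f z) :
    deriv g 0 = iteratedDeriv 2 f 0 / 2 ∧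
      iteratedDeriv 2 g 0 - deriv g 0 ^ 2 =
        4 * (iteratedDeriv 3 f 0 / 6) - 3 * (iteratedDeriv 2 f 0 / 2) ^ 2 := by
  have h2 := hgf.iteratedDeriv_eq 2
  have h3 := hgf.iteratedDeriv_eq 3
  rw [iteratedDeriv_fun_mul hg.contDiffAt hf.contDiffAt,
    iteratedDeriv_succ_mul_id_zero hf.deriv.contDiffAt] at h2 h3
  simp only [Finset.sum_range_succ, Finset.range_one, Finset.sum_singleton, Nat.choose_zero_right,
    Nat.choose_one_right, Nat.choose_succ_self_right, Nat.choose_self, Nat.cast_one,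
    Nat.cast_ofNat, Nat.reduceAdd, Nat.reduceSub, Nat.add_one_sub_one, tsub_zero, tsub_self,
    iteratedDeriv_zero, iteratedDeriv_one, ← iteratedDeriv_succ', hf0, hf1, hg0, mul_zero,
    mul_one, one_mul, add_zero] at h2 h3
  have hg1 : deriv g 0 = iteratedDeriv 2 f 0 / 2 := by linear_combination h2 / 2
  exact ⟨hg1, by linear_combination h3 / 3 - (deriv g 0 + 3 * iteratedDeriv 2 f 0 / 2) * hg1⟩

theorem norm_four_mul_coeff_three_sub_le_of_abs_arg_lt {α : ℝ} (hα0 : 0 < α) (hα1 : α ≤ 1)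
    {f g : ℂ → ℂ} (hf : DifferentiableOn ℂ f (ball 0 1)) (hf0 : f 0 = 0) (hf1 : deriv f 0 = 1)
    (hfz : ∀ z ∈ ball (0 : ℂ) 1, z ≠ 0 → f z ≠ 0) (hg0 : g 0 = 1)
    (hgf : ∀ z ∈ ball (0 : ℂ) 1, z ≠ 0 → g z = z * deriv f z / f z)
    (harg : ∀ z ∈ ball (0 : ℂ) 1, g z ≠ 0 ∧ |arg (g z)| < α * Real.pi / 2) :
    ‖4 * (iteratedDeriv 3 f 0 / 6) - 3 * (iteratedDeriv 2 f 0 / 2) ^ 2‖ ≤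
      4 * α - ‖iteratedDeriv 2 f 0 / 2‖ ^ 2 / α := by
  have hgd := differentiableOn_of_eq_mul_deriv_div isOpen_ball (mem_ball_self one_pos) hf hf0 hf1
    hfz hg0 hgf
  have hmul : (fun z => g z * f z) =ᶠ[𝓝 0] fun z => z * deriv f z :=
    eventually_of_mem (ball_mem_nhds 0 one_pos) fun z hz => by
      rcases eq_or_ne z 0 with rfl | hz0
      · simp [hf0]
      · show g z * f z = z * deriv f z
        rw [hgf z hz hz0]
        field_simp [hfz z hz hz0]
  obtain ⟨hg1, hQ⟩ := deriv_and_iteratedDeriv_two_of_mul_eq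
    (hf.analyticAt (ball_mem_nhds 0 one_pos)) (hgd.analyticAt (ball_mem_nhds 0 one_pos))
    hf0 hf1 hg0 hmul
  rw [← hQ, ← hg1]
  exact norm_iteratedDeriv_two_sub_sq_le_of_abs_arg_lt hα0 hα1 hgd hg0 harg

end StronglyStarlike

theorem le_two_mul_div_sqrt_one_add {α m : ℝ} (hα : 0 < α) (hm : 0 ≤ m)
    (h : 2 * m ^ 2 ≤ 8 * α - 2 * (m ^ 2 / α)) : m ≤ 2 * α / Real.sqrt (1 + α) := by
  have hdiv : m ^ 2 / α * α = m ^ 2 := div_mul_cancel₀ _ hα.ne'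
  have hsq : m ^ 2 * (1 + α) ≤ (2 * α) ^ 2 := by
    nlinarith [mul_le_mul_of_nonneg_right h hα.le]
  rw [le_div_iff₀ (Real.sqrt_pos.mpr (by linarith)), ← Real.sqrt_sq hm,
    ← Real.sqrt_mul (sq_nonneg m)]
  exact Real.sqrt_le_iff.mpr ⟨by positivity, hsq⟩

theorem stmt7 (α : ℝ) (hα0 : 0 < α) (hα1 : α ≤ 1)
    (f F : ℂ → ℂ)
    (hf : DifferentiableOn ℂ f (ball 0 1)) (hf0 : f 0 = 0) (hf1 : deriv f 0 = 1)
    (hfi : InjOn f (ball 0 1))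
    (hF : DifferentiableOn ℂ F (ball 0 1)) (hF0 : F 0 = 0) (hFi : InjOn F (ball 0 1))
    (hFf : ∀ᶠ z in nhds (0 : ℂ), F (f z) = z)
    (g : ℂ → ℂ) (hg0 : g 0 = 1)
    (hgf : ∀ z ∈ ball (0 : ℂ) 1, z ≠ 0 → g z = z * deriv f z / f z)
    (hgarg : ∀ z ∈ ball (0 : ℂ) 1, g z ≠ 0 ∧ |Complex.arg (g z)| < α * Real.pi / 2)
    (G : ℂ → ℂ) (hG0 : G 0 = 1)
    (hGF : ∀ w ∈ ball (0 : ℂ) 1, w ≠ 0 → G w = w * deriv F w / F w)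
    (hGarg : ∀ w ∈ ball (0 : ℂ) 1, G w ≠ 0 ∧ |Complex.arg (G w)| < α * Real.pi / 2) :
    ‖iteratedDeriv 2 f 0 / 2‖ ≤ 2 * α / Real.sqrt (1 + α) := by
  have hnhds : ball (0 : ℂ) 1 ∈ 𝓝 0 := ball_mem_nhds 0 one_pos
  have hzeros : ∀ {u : ℂ → ℂ}, u 0 = 0 → InjOn u (ball 0 1) →
      ∀ z ∈ ball (0 : ℂ) 1, z ≠ 0 → u z ≠ 0 := fun hu0 hui z hz hz0 huz =>
    hz0 (hui hz (mem_of_mem_nhds hnhds) (huz.trans hu0.symm))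
  have hFa : AnalyticAt ℂ F (f 0) := by rw [hf0]; exact hF.analyticAt hnhds
  obtain ⟨hF1, hF2, hF3⟩ := iteratedDeriv_of_comp_eq_id (hf.analyticAt hnhds) hFa hf1 hFf
  rw [hf0] at hF1 hF2 hF3
  have hbound_f := norm_four_mul_coeff_three_sub_le_of_abs_arg_lt hα0 hα1 hf hf0 hf1
    (hzeros hf0 hfi) hg0 hgf hgarg
  have hbound_F := norm_four_mul_coeff_three_sub_le_of_abs_arg_lt hα0 hα1 hF hF0 hF1
    (hzeros hF0 hFi) hG0 hGF hGarg
  rw [hF2, hF3, neg_div, norm_neg] at hbound_F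
  set a := iteratedDeriv 2 f 0 / 2
  have hsum : (4 * (iteratedDeriv 3 f 0 / 6) - 3 * a ^ 2) +
      (4 * ((3 * iteratedDeriv 2 f 0 ^ 2 - iteratedDeriv 3 f 0) / 6) - 3 * (-a) ^ 2) =
        2 * a ^ 2 := by
    ring
  have htri := (norm_add_le _ _).trans (add_le_add hbound_f hbound_F)
  rw [hsum, norm_mul, norm_pow, Complex.norm_two] at htri
  exact le_two_mul_div_sqrt_one_add hα0 (norm_nonneg a) (by linarith)
end
end
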